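/- Let T be a torus over an algebraically closed field F with an endomorphism F_T induced by a Frobenius of a finite field structure, and let w act on T as an algebraic group automorphism. Then the Lang map L_{wF_T}(t) = t⁻¹ · w(F_T(t)) is surjective on F-points. More abstractly: if G is a connected linear algebraic group over an algebraically closed field of positive characteristic and σ : G → G is a surjective endomorphism with finite fixed point group, then the map g ↦ g⁻¹ σ(g) is surjective. -/
import Mathlib

open Finset

private lemma aux_root (k : Type*) [Field k] [IsAlgClosed k] (d : ℤ) (hd : d ≠ 0)
    (x : kˣ) : ∃ y : kˣ, y ^ d = x := by
  have he : 0 < d.natAbs := Int.natAbs_pos.mpr hd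
  obtain ⟨z, hz⟩ := IsAlgClosed.exists_pow_nat_eq (x : k) he
  have hz0 : z ≠ 0 := by
    rintro rfl
    rw [zero_pow he.ne'] at hz
    exact x.ne_zero hz.symm
  set y := Units.mk0 z hz0 with hy0
  have hy : y ^ (d.natAbs : ℤ) = x := by
    rw [zpow_natCast]
    ext
    simpa [hy0] using hz
  rcases Int.natAbs_eq d with h | h
  · exact ⟨y, by rw [← h] at hy; exact hy⟩
  · refine ⟨y⁻¹, ?_⟩
    rw [h, zpow_neg, inv_zpow, inv_inv, hy]

private lemma aux_zpow_sum {G : Type*} [CommGroup G] (a : G) {ι : Type*} (s : Finset ι)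
    (f : ι → ℤ) : a ^ (∑ j ∈ s, f j) = ∏ j ∈ s, a ^ f j := by
  induction s using Finset.cons_induction with
  | empty => simp
  | cons i s hi ih => rw [Finset.sum_cons, Finset.prod_cons, zpow_add, ih]

/-- Lang's theorem for a (split) torus T = 𝔾_mⁿ over an algebraically closed
field of characteristic p > 0, twisted by an algebraic automorphism `w` of the
torus (given by a matrix of exponents `M` invertible over ℤ) composed with the
q-power Frobenius: the Lang map t ↦ t⁻¹ · w(F(t)) is surjective on points. -/
theorem lang_surjective_torus (k : Type*) [Field k] [IsAlgClosed k]
    (p : ℕ) [Fact p.Prime] [CharP k p] (m : ℕ) (hm : 1 ≤ m)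
    (n : ℕ) (M : Matrix (Fin n) (Fin n) ℤ) (hM : IsUnit M.det)
    (w : (Fin n → kˣ) → (Fin n → kˣ))
    (hw : ∀ t i, w t i = ∏ j, (t j) ^ (M i j)) :
    Function.Surjective
      (fun t : Fin n → kˣ => t⁻¹ * w (fun j => (t j) ^ (p ^ m))) := by
  intro s
  set q : ℤ := ((p ^ m : ℕ) : ℤ) with hq
  set N : Matrix (Fin n) (Fin n) ℤ := q • M - 1 with hNdef
  have hNapp : ∀ i j, N i j = q * M i j - (if i = j then (1:ℤ) else 0) := by
    intro i j
    rw [hNdef, Matrix.sub_apply, Matrix.smul_apply, Matrix.one_apply, smul_eq_mul]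
  -- det N ≠ 0
  have hdet : N.det ≠ 0 := by
    intro h
    have hcast : ((Int.castRingHom (ZMod p)).mapMatrix N).det = 0 := by
      rw [← RingHom.map_det, h, map_zero]
    have hqz : ((q : ℤ) : ZMod p) = 0 := by
      rw [hq]
      push_cast
      rw [ZMod.natCast_self, zero_pow (by omega : m ≠ 0)]
    have hmap : (Int.castRingHom (ZMod p)).mapMatrix N = -1 := by
      ext i j
      simp only [RingHom.mapMatrix_apply, Matrix.map_apply, eq_intCast, hNapp i j,
        Int.cast_sub, Int.cast_mul, hqz, zero_mul, zero_sub, Matrix.neg_apply,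
        Matrix.one_apply, apply_ite (Int.cast : ℤ → ZMod p), Int.cast_one, Int.cast_zero]
    rw [hmap] at hcast
    have h1 : ((-1 : Matrix (Fin n) (Fin n) (ZMod p))).det = (-1) ^ n := by
      simp [Matrix.det_neg]
    rw [h1] at hcast
    exact pow_ne_zero n (neg_ne_zero.mpr one_ne_zero) hcast
  -- choose roots
  have hroot : ∀ i, ∃ y : kˣ, y ^ N.det = s i := fun i => aux_root k N.det hdet (s i)
  choose r hr using hroot
  set u : Fin n → kˣ := fun j => ∏ l, r l ^ (N.adjugate j l) with hu
  refine ⟨u, ?_⟩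
  funext i
  show (u⁻¹ * w (fun j => u j ^ p ^ m)) i = s i
  rw [Pi.mul_apply, Pi.inv_apply, hw]
  have step1 : ∀ j, (u j ^ (p ^ m : ℕ)) ^ M i j = u j ^ (q * M i j) := by
    intro j
    rw [← zpow_natCast (u j) (p ^ m), ← zpow_mul, ← hq]
  have step2 : (u i)⁻¹ * ∏ j, (u j ^ (p ^ m : ℕ)) ^ M i j = ∏ j, u j ^ (N i j) := by
    have key : ∀ j, u j ^ (N i j) = u j ^ (q * M i j) * u j ^ (-(if i = j then (1:ℤ) else 0)) := by
      intro j
      rw [← zpow_add, hNapp i j, sub_eq_add_neg]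
    rw [Finset.prod_congr rfl (fun j _ => key j), Finset.prod_mul_distrib]
    have h3 : (∏ j, u j ^ (-(if i = j then (1:ℤ) else 0))) = (u i)⁻¹ := by
      rw [Finset.prod_eq_single i (fun j _ hj => by simp [Ne.symm hj]) (by simp)]
      simp
    rw [h3, Finset.prod_congr rfl (fun j _ => step1 j)]
    exact mul_comm _ _
  rw [step2]
  have step3 : ∏ j, u j ^ (N i j) = ∏ l, r l ^ ((N * N.adjugate) i l) := by
    have e1 : ∀ j, u j ^ (N i j) = ∏ l, r l ^ (N i j * N.adjugate j l) := by
      intro j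
      rw [hu]
      rw [← Finset.prod_zpow]
      exact Finset.prod_congr rfl (fun l _ => by rw [← zpow_mul, mul_comm (N.adjugate j l)])
    rw [Finset.prod_congr rfl (fun j _ => e1 j), Finset.prod_comm]
    refine Finset.prod_congr rfl (fun l _ => ?_)
    rw [Matrix.mul_apply, aux_zpow_sum]
  rw [step3, Matrix.mul_adjugate]
  have step4 : ∀ l, ((N.det • (1 : Matrix (Fin n) (Fin n) ℤ)) i l)
      = N.det * (if i = l then (1:ℤ) else 0) := by
    intro l
    rw [Matrix.smul_apply, Matrix.one_apply, smul_eq_mul]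
  rw [Finset.prod_congr rfl (fun l _ => by rw [step4 l])]
  rw [Finset.prod_eq_single i (fun l _ hl => by simp [Ne.symm hl]) (by simp)]
  simpa using hr i
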